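/- arXiv:2307.15459 — 4 statements merged into one kernel-verified Lean document; each statement's English description precedes it below -/
import Mathlib

section
/- Fix n, parameters b ∈ ℝⁿ, lower bounds l, upper bounds u with l_i ≤ u_i, and resource R with ∑ l ≤ R ≤ ∑ u. Suppose l', u' are such that l'_i = l_i and u'_i = u_i for all i ≠ s, while l'_s ≤ l_s, u'_s ≤ u_s, and still ∑ l' ≤ R ≤ ∑ u'. Let λ and λ' be respectively minimal reals with z(λ) = R and z'(λ') = R, where z(λ)=∑ max(l_i,min(u_i,λ−b_i)) and z' analogously with l',u'. Then λ' ≥ λ. -/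
theorem stmt_9 (n : ℕ) (b l u l' u' : Fin n → ℝ)
    (hlu : ∀ i, l i ≤ u i) (hlu' : ∀ i, l' i ≤ u' i)
    (R : ℝ) (hRl : ∑ i, l i ≤ R) (hRu : R ≤ ∑ i, u i)
    (hRl' : ∑ i, l' i ≤ R) (hRu' : R ≤ ∑ i, u' i)
    (s : Fin n)
    (hl : ∀ i, i ≠ s → l' i = l i) (hu : ∀ i, i ≠ s → u' i = u i)
    (hls : l' s ≤ l s) (hus : u' s ≤ u s)
    (lam lam' : ℝ)
    (hlam : IsLeast {μ : ℝ | ∑ i, max (l i) (min (u i) (μ - b i)) = R} lam)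
    (hlam' : IsLeast {μ : ℝ | ∑ i, max (l' i) (min (u' i) (μ - b i)) = R} lam') :
    lam ≤ lam' := by
  rcases Nat.eq_zero_or_pos n with hn | hn
  · subst hn
    exact hlam.2 (by simpa using hlam'.1)
  have hne : (Finset.univ : Finset (Fin n)).Nonempty := by
    simpa [Finset.univ_nonempty_iff] using Fin.pos_iff_nonempty.mp hn
  set f : ℝ → ℝ := fun μ => ∑ i, max (l i) (min (u i) (μ - b i)) with hf
  have hcont : Continuous f := by
    apply continuous_finset_sum
    intro i _
    exact continuous_const.max (continuous_const.min ((continuous_id.sub continuous_const)))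
  -- z(λ') ≥ z'(λ') = R
  have hz : R ≤ f lam' := by
    rw [← hlam'.1]
    apply Finset.sum_le_sum
    intro i _
    by_cases hi : i = s
    · subst hi
      exact max_le_max hls (min_le_min hus le_rfl)
    · rw [hl i hi, hu i hi]
  set M : ℝ := min lam' (Finset.univ.inf' hne (fun i => l i + b i)) with hM
  have hMle : M ≤ lam' := min_le_left _ _
  have hfM : f M ≤ R := by
    refine le_trans (le_of_eq ?_) hRl
    apply Finset.sum_congr rfl
    intro i _
    have h1 : M - b i ≤ l i := by
      have := min_le_right lam' (Finset.univ.inf' hne (fun i => l i + b i))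
      have h2 := Finset.inf'_le (fun i => l i + b i) (Finset.mem_univ i)
      linarith [le_trans this h2]
    have : min (u i) (M - b i) ≤ l i := le_trans (min_le_right _ _) h1
    exact max_eq_left this
  have := intermediate_value_Icc hMle hcont.continuousOn
  have hmem : R ∈ Set.Icc (f M) (f lam') := ⟨hfM, hz⟩
  obtain ⟨μ, hμIcc, hμR⟩ := this hmem
  exact le_trans (hlam.2 hμR) hμIcc.2
end

section
/- For n ≥ 3, L > 0, and 0 < ε < (L/(n−1))(n/2 − 1): with b_1 = −nL/(2(n−1)) − ε and x = L, we have max(0, x + b_1) = L(n/2 − 1)/(n−1) − ε > 0, whereas with x = nL/(n−1) and b_i = −nL/(n−1) we get max(0, x + b_i) = 0; hence the hinge objective of the solution (0, nL/(n−1), …, nL/(n−1)) equals 0, which is strictly less than the hinge objective of the solution (L, …, L), which equals L(n/2 − 1)/(n−1) − ε. -/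
theorem sum_max_zero_eq_single {ι M : Type*} [Fintype ι] [AddCommMonoid M] [LinearOrder M]
    (f : ι → M) (j : ι) (h : ∀ i ≠ j, f i ≤ 0) :
    ∑ i, max 0 (f i) = max 0 (f j) :=
  Finset.sum_eq_single j (fun i _ hi => max_eq_left (h i hi)) (by simp)

section Arithmetic

variable {m L ε : ℝ}

theorem add_neg_div_two_mul_sub_one_sub (hm : m ≠ 1) :
    L + (-(m * L) / (2 * (m - 1)) - ε) = L * (m / 2 - 1) / (m - 1) - ε := by
  have : m - 1 ≠ 0 := sub_ne_zero.2 hm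
  field_simp
  ring

theorem neg_div_two_mul_sub_one_sub_nonpos (hm : 1 < m) (hL : 0 ≤ L) (hε : 0 ≤ ε) :
    -(m * L) / (2 * (m - 1)) - ε ≤ 0 := by
  have : 0 ≤ m * L / (2 * (m - 1)) := by have := sub_pos.2 hm; positivity
  rw [neg_div]
  linarith

theorem add_neg_mul_div_sub_one_nonpos (hm : 1 < m) (hL : 0 ≤ L) :
    L + -(m * L) / (m - 1) ≤ 0 := by
  have hm1 : 0 < m - 1 := sub_pos.2 hm
  have : L + -(m * L) / (m - 1) = -(L / (m - 1)) := by field_simp; ring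
  rw [this, neg_nonpos]
  positivity

end Arithmetic

theorem stmt_12 (n : ℕ) (hn : 3 ≤ n) (L ε : ℝ) (hL : 0 < L)
    (hε0 : 0 < ε) (hε1 : ε < (L / (n - 1)) * (n / 2 - 1))
    (b : Fin n → ℝ)
    (hb1 : b ⟨0, by omega⟩ = -(n * L) / (2 * (n - 1)) - ε)
    (hbi : ∀ i : Fin n, i ≠ ⟨0, by omega⟩ → b i = -(n * L) / (n - 1))
    (x1 x2 : Fin n → ℝ)
    (hx1 : ∀ i, x1 i = L)
    (hx2 : ∀ i : Fin n, x2 i = if i = ⟨0, by omega⟩ then 0 else n * L / (n - 1)) :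
    max 0 (L + b ⟨0, by omega⟩) = L * (n / 2 - 1) / (n - 1) - ε ∧
    0 < L * (n / 2 - 1) / (n - 1) - ε ∧
    (∀ i : Fin n, i ≠ ⟨0, by omega⟩ → max 0 (n * L / (n - 1) + b i) = 0) ∧
    (∑ i, max 0 (x2 i + b i) = 0) ∧
    (∑ i, max 0 (x1 i + b i) = L * (n / 2 - 1) / (n - 1) - ε) ∧
    (∑ i, max 0 (x2 i + b i) < ∑ i, max 0 (x1 i + b i)) := by
  have hn1 : (1 : ℝ) < n := by exact_mod_cast (by omega : 1 < n)
  have hv : 0 < L * (n / 2 - 1) / (n - 1) - ε := sub_pos.2 (by rwa [div_mul_eq_mul_div] at hε1)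
  have hfirst : max 0 (L + b ⟨0, by omega⟩) = L * (n / 2 - 1) / (n - 1) - ε := by
    rw [hb1, add_neg_div_two_mul_sub_one_sub hn1.ne', max_eq_right hv.le]
  have hrest : ∀ i : Fin n, i ≠ ⟨0, by omega⟩ → max 0 (n * L / (n - 1) + b i) = 0 := by
    intro i hi
    rw [hbi i hi, neg_div, add_neg_cancel, max_self]
  have hsum2 : ∑ i, max 0 (x2 i + b i) = 0 := by
    rw [sum_max_zero_eq_single _ ⟨0, by omega⟩, hx2, if_pos rfl, zero_add, hb1]
    · exact max_eq_left (neg_div_two_mul_sub_one_sub_nonpos hn1 hL.le hε0.le)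
    · intro i hi
      rw [hx2, if_neg hi, hbi i hi, neg_div, add_neg_cancel]
  have hsum1 : ∑ i, max 0 (x1 i + b i) = L * (n / 2 - 1) / (n - 1) - ε := by
    rw [sum_max_zero_eq_single _ ⟨0, by omega⟩, hx1, hfirst]
    intro i hi
    rw [hx1, hbi i hi]
    exact add_neg_mul_div_sub_one_nonpos hn1 hL.le
  exact ⟨hfirst, hv, hrest, hsum2, hsum1, by rwa [hsum1, hsum2]⟩
end

section
/- Let b, l, u ∈ ℤⁿ with l_i ≤ u_i, R ∈ ℤ, and let λ ∈ ℝ. Set λ̃ := (⌊λ⌋ + ⌈λ⌉)/2 where λ ∉ ℤ. Suppose x̃ ∈ ℤⁿ satisfies for each i: x̃_i = l_i if λ̃ ≤ l_i + b_i; x̃_i ∈ {⌊λ⌋ − b_i, ⌈λ⌉ − b_i} if l_i + b_i ≤ λ̃ ≤ u_i + b_i; and x̃_i = u_i if λ̃ ≥ u_i + b_i. Then x̃ minimizes the Lagrangian ∑_i ½(x_i + b_i)² − λ̃ (∑_i x_i − R) over all integer vectors x ∈ ℤⁿ with l_i ≤ x_i ≤ u_i. -/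
theorem stmt_15 (n : ℕ) (b l u : Fin n → ℤ) (hlu : ∀ i, l i ≤ u i)
    (R : ℤ) (lam : ℝ) (hlam : ¬ ∃ k : ℤ, lam = k)
    (lamt : ℝ) (hlamt : lamt = ((⌊lam⌋ : ℝ) + (⌈lam⌉ : ℝ)) / 2)
    (xt : Fin n → ℤ) (hbox : ∀ i, l i ≤ xt i ∧ xt i ≤ u i)
    (h1 : ∀ i, lamt ≤ (l i : ℝ) + (b i : ℝ) → xt i = l i)
    (h2 : ∀ i, (l i : ℝ) + (b i : ℝ) ≤ lamt → lamt ≤ (u i : ℝ) + (b i : ℝ) →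
      xt i = ⌊lam⌋ - b i ∨ xt i = ⌈lam⌉ - b i)
    (h3 : ∀ i, (u i : ℝ) + (b i : ℝ) ≤ lamt → xt i = u i) :
    ∀ x : Fin n → ℤ, (∀ i, l i ≤ x i ∧ x i ≤ u i) →
      (∑ i, (1/2) * ((xt i : ℝ) + (b i : ℝ))^2) - lamt * ((∑ i, (xt i : ℝ)) - R) ≤
      (∑ i, (1/2) * ((x i : ℝ) + (b i : ℝ))^2) - lamt * ((∑ i, (x i : ℝ)) - R) := by
  intro x hx
  -- ceiling = floor + 1
  have hne : lam ≠ (⌊lam⌋ : ℝ) := fun h => hlam ⟨⌊lam⌋, h⟩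
  have hflt : (⌊lam⌋ : ℝ) < lam := lt_of_le_of_ne (Int.floor_le lam) (Ne.symm hne)
  have hceil : (⌈lam⌉ : ℤ) = ⌊lam⌋ + 1 := by
    have h1' : ⌈lam⌉ ≤ ⌊lam⌋ + 1 := Int.ceil_le_floor_add_one lam
    have h2' : (⌊lam⌋ : ℝ) < (⌈lam⌉ : ℝ) := lt_of_lt_of_le hflt (Int.le_ceil lam)
    have h3' : ⌊lam⌋ < ⌈lam⌉ := by exact_mod_cast h2'
    omega
  set m : ℤ := ⌊lam⌋ with hmdef
  have hm : lamt = (m : ℝ) + 1/2 := by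
    rw [hlamt, hceil]; push_cast; ring
  have key : ∀ i, (1/2) * ((xt i : ℝ) + (b i : ℝ))^2 - lamt * (xt i : ℝ) ≤
      (1/2) * ((x i : ℝ) + (b i : ℝ))^2 - lamt * (x i : ℝ) := by
    intro i
    have hxl : (l i : ℝ) ≤ (x i : ℝ) := by exact_mod_cast (hx i).1
    have hxu : (x i : ℝ) ≤ (u i : ℝ) := by exact_mod_cast (hx i).2
    rcases le_or_gt lamt ((l i : ℝ) + (b i : ℝ)) with hA | hA
    · rw [h1 i hA]
      nlinarith [sq_nonneg ((x i : ℝ) - (l i : ℝ))]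
    · rcases le_or_gt ((u i : ℝ) + (b i : ℝ)) lamt with hB | hB
      · rw [h3 i hB]
        nlinarith [sq_nonneg ((u i : ℝ) - (x i : ℝ))]
      · have hsq : ((x i + b i : ℤ) - m) * ((x i + b i : ℤ) - m - 1) ≥ 0 := by
          rcases le_or_gt (x i + b i) m with hle | hlt
          · nlinarith
          · nlinarith
        have hsqR : ((x i : ℝ) + (b i : ℝ) - (m : ℝ)) * ((x i : ℝ) + (b i : ℝ) - (m : ℝ) - 1) ≥ 0 := by
          exact_mod_cast hsq
        rcases h2 i hA.le hB.le with he | he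
        · rw [he, hm]; push_cast; nlinarith
        · rw [he, hceil, hm]; push_cast; nlinarith
  have e : ∀ y : Fin n → ℤ,
      (∑ i, (1/2) * ((y i : ℝ) + (b i : ℝ))^2) - lamt * ((∑ i, (y i : ℝ)) - R) =
      (∑ i, ((1/2) * ((y i : ℝ) + (b i : ℝ))^2 - lamt * (y i : ℝ))) + lamt * R := by
    intro y
    rw [Finset.sum_sub_distrib, mul_sub, Finset.mul_sum]
    ring
  rw [e xt, e x]
  have hsum := Finset.sum_le_sum (s := Finset.univ) (fun i _ => key i)
  linarith
end

section
/- Suppose x* ∈ ℝⁿ minimizes ∑_i φ(x_i + b_i) over the set {x : ∑ x_i = R, x_i ∈ ⋃_{j=1}^m [l_{i,j}, u_{i,j}]}, where φ is convex continuous, b is nonincreasing, the intervals are disjoint and shared across i (l_{i,j} = l̃_j for j ≥ 2, u_{i,j} = ũ_j for j ≤ m−1), and for all i: u_{i,m} − l_{i,m} ≥ max_{j<m} (l̃_{j+1} − ũ_j) and u_{i,1} − l_{i,1} ≥ max_{j<m}(l̃_{j+1} − ũ_j) (case (F2,L2)). Then there exists an optimal solution x** such that for all s < t, the index of the interval containing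 x**_s is at most the index of the interval containing x**_t. -/
/-!
The optimal solutions form a compact set; pick one maximising the potential `∑ i, i * x i`.
If some `s < t` had `x s` in a higher interval than `x t`, an amount could be moved from
coordinate `s` to coordinate `t` with both new values between `x t` and `x s`: slide both inside
their intervals, swap the two values, or, when a coordinate sits at the extreme end of the
range of intervals, let it jump across a single gap, for which (F2) and (L2) leave room. As
`b` is nonincreasing, convexity of `φ` shows that the cost does not increase, while the
potential strictly increases.
-/

open Function Set

theorem ConvexOn.map_add_map_add_sub_le {s : Set ℝ} {φ : ℝ → ℝ} (hφ : ConvexOn ℝ s φ)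
    {a b p : ℝ} (ha : a ∈ s) (hb : b ∈ s) (hap : a ≤ p) (hpb : p ≤ b) :
    φ p + φ (a + b - p) ≤ φ a + φ b := by
  obtain rfl | hab := (hap.trans hpb).eq_or_lt
  · rw [le_antisymm hpb hap, add_sub_cancel_left]
  -- `p` and `a + b - p` are the combinations of `a, b` with weights `(θ, 1 - θ)` and `(1 - θ, θ)`
  set θ := (b - p) / (b - a)
  have hθ : θ * (b - a) = b - p := div_mul_cancel₀ _ (sub_pos.2 hab).ne'
  have hθ₀ : 0 ≤ θ := div_nonneg (sub_nonneg.2 hpb) (sub_pos.2 hab).le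
  have hθ₁ : 0 ≤ 1 - θ := sub_nonneg.2 (div_le_one_of_le₀ (by linarith) (sub_pos.2 hab).le)
  have hp := hφ.2 ha hb hθ₀ hθ₁ (add_sub_cancel _ _)
  have hq := hφ.2 ha hb hθ₁ hθ₀ (sub_add_cancel _ _)
  simp only [smul_eq_mul] at hp hq
  rw [show θ * a + (1 - θ) * b = p by linear_combination -hθ] at hp
  rw [show (1 - θ) * a + θ * b = a + b - p by linear_combination hθ] at hq
  linarith

theorem Fintype.sum_update_update {ι : Type*} [Fintype ι] [DecidableEq ι] (F : ι → ℝ → ℝ)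
    (x : ι → ℝ) {s t : ι} (hst : s ≠ t) (z y : ℝ) :
    ∑ i, F i (update (update x t y) s z i) =
      ∑ i, F i (x i) + (F s z - F s (x s)) + (F t y - F t (x t)) := by
  have h := Fintype.sum_eq_add (f := fun i => F i (update (update x t y) s z i) - F i (x i))
    s t hst fun i hi => by simp [update_of_ne hi.1, update_of_ne hi.2]
  simp only [Finset.sum_sub_distrib, update_self, update_of_ne hst.symm] at h
  linarith

theorem monotone_of_le_of_lt {α β : Type*} [PartialOrder α] [Preorder β] {f g : α → β}
    (hfg : ∀ a, f a ≤ g a) (hgf : ∀ a b, a < b → g a < f b) : Monotone f ∧ Monotone g :=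
  ⟨monotone_iff_forall_lt.2 fun a b h => ((hfg a).trans_lt (hgf a b h)).le,
    monotone_iff_forall_lt.2 fun a b h => ((hgf a b h).trans_le (hfg b)).le⟩

def feasibleSet {ι κ : Type*} [Fintype ι] (l u : ι → κ → ℝ) (R : ℝ) : Set (ι → ℝ) :=
  {x | ∑ i, x i = R ∧ ∀ i, ∃ j, l i j ≤ x i ∧ x i ≤ u i j}

theorem isCompact_feasibleSet {ι κ : Type*} [Fintype ι] [Finite κ] (l u : ι → κ → ℝ) (R : ℝ) :
    IsCompact (feasibleSet l u R) := by
  have h : feasibleSet l u R = {x | ∑ i, x i = R} ∩ univ.pi fun i => ⋃ j, Icc (l i j) (u i j) := by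
    ext x
    simp [feasibleSet, Set.mem_pi]
  rw [h]
  exact (isCompact_univ_pi fun i => isCompact_iUnion fun j => isCompact_Icc).inter_left
    (isClosed_eq (by fun_prop) continuous_const)

section Update

variable {ι : Type*} [Fintype ι] [DecidableEq ι] {x : ι → ℝ} {s t : ι} {y z : ℝ}

theorem update_update_mem_feasibleSet {κ : Type*} {l u : ι → κ → ℝ} {R : ℝ}
    (hx : x ∈ feasibleSet l u R) (hst : s ≠ t) (hyz : y + z = x t + x s)
    (hy : ∃ j, l t j ≤ y ∧ y ≤ u t j) (hz : ∃ j, l s j ≤ z ∧ z ≤ u s j) :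
    update (update x t y) s z ∈ feasibleSet l u R := by
  refine ⟨?_, ?_⟩
  · linarith [Fintype.sum_update_update (fun _ v => v) x hst z y, hx.1]
  · intro i
    rcases eq_or_ne i s with rfl | his
    · simpa using hz
    rcases eq_or_ne i t with rfl | hit
    · simpa [his] using hy
    · simpa [his, hit] using hx.2 i

theorem sum_map_add_update_update_le {φ : ℝ → ℝ} (hφ : ConvexOn ℝ univ φ) {b : ι → ℝ}
    (hst : s ≠ t) (hb : b t ≤ b s) (hyz : y + z = x t + x s) (hy : x t ≤ y) (hys : y ≤ x s) :
    ∑ i, φ (update (update x t y) s z i + b i) ≤ ∑ i, φ (x i + b i) := by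
  have h := hφ.map_add_map_add_sub_le (mem_univ (x t + b t)) (mem_univ (x s + b s))
    (p := z + b s) (by linarith) (by linarith)
  rw [show x t + b t + (x s + b s) - (z + b s) = y + b t by linarith] at h
  linarith [Fintype.sum_update_update (fun i v => φ (v + b i)) x hst z y]

end Update

theorem sum_mul_lt_sum_mul_update_update {n : ℕ} {x : Fin n → ℝ} {s t : Fin n} {y z : ℝ}
    (hst : s < t) (hyz : y + z = x t + x s) (hy : x t < y) :
    ∑ i : Fin n, ((i : ℕ) : ℝ) * x i <
      ∑ i : Fin n, ((i : ℕ) : ℝ) * update (update x t y) s z i := by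
  have hst' : ((s : ℕ) : ℝ) < t := by exact_mod_cast hst
  have h := Fintype.sum_update_update (fun (i : Fin n) v => ((i : ℕ) : ℝ) * v) x hst.ne z y
  nlinarith

section Transfer

variable {ι : Type*} {k : ℕ} {l u : ι → Fin (k + 1) → ℝ} {s t : ι} {js jt : Fin (k + 1)}
  {xs xt : ℝ}

theorem exists_transfer_of_eq_upper (hlu : ∀ i j, l i j ≤ u i j)
    (hdisj : ∀ i j j', j < j' → u i j < l i j')
    (hl : ∀ j, j ≠ 0 → l s j = l t j) (hu : ∀ j, j ≠ Fin.last k → u s j = u t j)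
    (hL2 : ∀ j : Fin k, l t j.succ - u t j.castSucc ≤ u t (Fin.last k) - l t (Fin.last k))
    (hj : jt < js) (hxs : l s js ≤ xs ∧ xs ≤ u s js) (hxt : xt = u t jt) :
    ∃ y z, y + z = xt + xs ∧ xt < y ∧ y ≤ xs ∧
      (∃ j, l t j ≤ y ∧ y ≤ u t j) ∧ ∃ j, l s j ≤ z ∧ z ≤ u s j := by
  have hjs : js ≠ 0 := ((Fin.zero_le jt).trans_lt hj).ne'
  have hjt : jt ≠ Fin.last k := (hj.trans_le (Fin.le_last js)).ne
  have hxt_lt : xt < l s js := by rw [hxt, hl js hjs]; exact hdisj t jt js hj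
  by_cases hxs_t : xs ≤ u t js
  · exact ⟨xs, xt, add_comm _ _, by linarith, le_rfl, ⟨js, hl js hjs ▸ hxs.1, hxs_t⟩,
      jt, hxt ▸ hu jt hjt ▸ hlu s jt, by rw [hxt, hu jt hjt]⟩
  -- `xs` lies above `t`'s copy of interval `js`, so `js` is the last one; `t` jumps one gap up
  have hjs_last : js = Fin.last k := by
    by_contra h
    exact hxs_t (hu js h ▸ hxs.2)
  subst hjs_last
  obtain ⟨j, rfl⟩ := Fin.exists_castSucc_eq.2 hjt
  have hgap := hdisj t _ _ j.castSucc_lt_succ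
  have hy : l t j.succ ≤ l t (Fin.last k) :=
    (monotone_of_le_of_lt (hlu t) (hdisj t)).1 (Fin.le_last _)
  refine ⟨l t j.succ, xt + xs - l t j.succ, by ring, by linarith, by linarith [hl _ hjs],
    ⟨j.succ, le_rfl, hlu t _⟩, Fin.last k, ?_, by linarith⟩
  linarith [hL2 j, hl _ hjs]

theorem exists_transfer_of_eq_lower (hlu : ∀ i j, l i j ≤ u i j)
    (hdisj : ∀ i j j', j < j' → u i j < l i j')
    (hl : ∀ j, j ≠ 0 → l s j = l t j) (hu : ∀ j, j ≠ Fin.last k → u s j = u t j)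
    (hF2 : ∀ j : Fin k, l s j.succ - u s j.castSucc ≤ u s 0 - l s 0)
    (hj : jt < js) (hxs : xs = l s js) (hxt : l t jt ≤ xt ∧ xt ≤ u t jt) :
    ∃ y z, y + z = xt + xs ∧ xt < y ∧ y ≤ xs ∧
      (∃ j, l t j ≤ y ∧ y ≤ u t j) ∧ ∃ j, l s j ≤ z ∧ z ≤ u s j := by
  have hjs : js ≠ 0 := ((Fin.zero_le jt).trans_lt hj).ne'
  have hjt : jt ≠ Fin.last k := (hj.trans_le (Fin.le_last js)).ne
  have hxt_lt : xt < xs := by rw [hxs, hl js hjs]; linarith [hdisj t jt js hj]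
  by_cases hxt_s : l s jt ≤ xt
  · exact ⟨xs, xt, add_comm _ _, hxt_lt, le_rfl, ⟨js, by rw [hxs, hl js hjs],
      by rw [hxs, hl js hjs]; exact hlu t js⟩, jt, hxt_s, hu jt hjt ▸ hxt.2⟩
  -- `xt` lies below `s`'s copy of interval `jt`, so `jt` is the first one; `s` jumps one gap down
  have hjt_zero : jt = 0 := by
    by_contra h
    exact hxt_s (hl jt h ▸ hxt.1)
  subst hjt_zero
  obtain ⟨j, rfl⟩ := Fin.exists_succ_eq.2 hjs
  have hgap := hdisj s _ _ j.castSucc_lt_succ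
  have hz : u s 0 ≤ u s j.castSucc := (monotone_of_le_of_lt (hlu s) (hdisj s)).2 (Fin.zero_le _)
  refine ⟨xt + xs - u s j.castSucc, u s j.castSucc, by ring, by linarith, by linarith [hlu s 0],
    ⟨0, by linarith, ?_⟩, j.castSucc, hlu s _, le_rfl⟩
  linarith [hF2 j, hu 0 hjt]

theorem exists_transfer (hlu : ∀ i j, l i j ≤ u i j)
    (hdisj : ∀ i j j', j < j' → u i j < l i j')
    (hl : ∀ j, j ≠ 0 → l s j = l t j) (hu : ∀ j, j ≠ Fin.last k → u s j = u t j)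
    (hF2 : ∀ j : Fin k, l s j.succ - u s j.castSucc ≤ u s 0 - l s 0)
    (hL2 : ∀ j : Fin k, l t j.succ - u t j.castSucc ≤ u t (Fin.last k) - l t (Fin.last k))
    (hj : jt < js) (hxs : l s js ≤ xs ∧ xs ≤ u s js) (hxt : l t jt ≤ xt ∧ xt ≤ u t jt) :
    ∃ y z, y + z = xt + xs ∧ xt < y ∧ y ≤ xs ∧
      (∃ j, l t j ≤ y ∧ y ≤ u t j) ∧ ∃ j, l s j ≤ z ∧ z ≤ u s j := by
  obtain hxt_top | hxt_top := hxt.2.eq_or_lt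
  · exact exists_transfer_of_eq_upper hlu hdisj hl hu hL2 hj hxs hxt_top
  obtain hxs_bot | hxs_bot := hxs.1.eq_or_lt
  · exact exists_transfer_of_eq_lower hlu hdisj hl hu hF2 hj hxs_bot.symm hxt
  have hgap : u t jt < l s js := hl js ((Fin.zero_le jt).trans_lt hj).ne' ▸ hdisj t jt js hj
  set ε := min (u t jt - xt) (xs - l s js)
  have hε : 0 < ε := lt_min (by linarith) (by linarith)
  have hε₁ : ε ≤ u t jt - xt := min_le_left _ _
  have hε₂ : ε ≤ xs - l s js := min_le_right _ _
  exact ⟨xt + ε, xs - ε, by ring, by linarith, by linarith, ⟨jt, by linarith, by linarith⟩,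
    js, by linarith, by linarith⟩

end Transfer

theorem stmt_19 (n m : ℕ) (hm : 0 < m)
    (φ : ℝ → ℝ) (hφ : ConvexOn ℝ Set.univ φ)
    (b : Fin n → ℝ) (hb : Antitone b) (R : ℝ)
    (l u : Fin n → Fin m → ℝ) (lt ut : Fin m → ℝ)
    (hlu : ∀ i j, l i j ≤ u i j)
    (hdisj : ∀ (i : Fin n) (j j' : Fin m), j < j' → u i j < l i j')
    (hsharedl : ∀ (i : Fin n) (j : Fin m), j ≠ (⟨0, hm⟩ : Fin m) → l i j = lt j)
    (hsharedu : ∀ (i : Fin n) (j : Fin m), j ≠ (⟨m - 1, by omega⟩ : Fin m) →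
      u i j = ut j)
    -- (F2): the first interval of each variable is at least as long as any gap
    (hF2 : ∀ (i : Fin n) (j : ℕ) (hj : j + 1 < m),
      lt ⟨j + 1, hj⟩ - ut ⟨j, by omega⟩ ≤
        u i (⟨0, hm⟩ : Fin m) - l i (⟨0, hm⟩ : Fin m))
    -- (L2): the last interval of each variable is at least as long as any gap
    (hL2 : ∀ (i : Fin n) (j : ℕ) (hj : j + 1 < m),
      lt ⟨j + 1, hj⟩ - ut ⟨j, by omega⟩ ≤
        u i (⟨m - 1, by omega⟩ : Fin m) - l i (⟨m - 1, by omega⟩ : Fin m))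
    (xstar : Fin n → ℝ)
    (hfeas : ∑ i, xstar i = R ∧ ∀ i, ∃ j : Fin m, l i j ≤ xstar i ∧ xstar i ≤ u i j)
    (hopt : ∀ x : Fin n → ℝ,
      (∑ i, x i = R ∧ ∀ i, ∃ j : Fin m, l i j ≤ x i ∧ x i ≤ u i j) →
      ∑ i, φ (xstar i + b i) ≤ ∑ i, φ (x i + b i)) :
    ∃ xss : Fin n → ℝ,
      (∑ i, xss i = R ∧ ∀ i, ∃ j : Fin m, l i j ≤ xss i ∧ xss i ≤ u i j) ∧
      (∀ x : Fin n → ℝ,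
        (∑ i, x i = R ∧ ∀ i, ∃ j : Fin m, l i j ≤ x i ∧ x i ≤ u i j) →
        ∑ i, φ (xss i + b i) ≤ ∑ i, φ (x i + b i)) ∧
      (∀ s t : Fin n, s < t → ∀ js jt : Fin m,
        (l s js ≤ xss s ∧ xss s ≤ u s js) →
        (l t jt ≤ xss t ∧ xss t ≤ u t jt) → js ≤ jt) := by
  obtain ⟨k, rfl⟩ : ∃ k, m = k + 1 := ⟨m - 1, by omega⟩
  have hl (i i' : Fin n) (j : Fin (k + 1)) (hj : j ≠ 0) : l i j = l i' j :=
    (hsharedl i j hj).trans (hsharedl i' j hj).symm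
  have hu (i i' : Fin n) (j : Fin (k + 1)) (hj : j ≠ Fin.last k) : u i j = u i' j :=
    (hsharedu i j hj).trans (hsharedu i' j hj).symm
  have hgap (i : Fin n) (j : Fin k) : l i j.succ - u i j.castSucc = lt j.succ - ut j.castSucc := by
    rw [hsharedl i _ j.succ_ne_zero, hsharedu i _ j.castSucc_lt_last.ne]
  have hφc : Continuous φ := continuousOn_univ.1 (hφ.continuousOn isOpen_univ)
  have hK := (isCompact_feasibleSet l u R).inter_right
    (isClosed_le (by fun_prop) continuous_const : IsClosed
      {x : Fin n → ℝ | ∑ i, φ (x i + b i) ≤ ∑ i, φ (xstar i + b i)})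
  obtain ⟨xss, ⟨hxss, hcost⟩, hmax⟩ := hK.exists_isMaxOn ⟨xstar, hfeas, Set.mem_ofPred.2 le_rfl⟩
    (f := fun x => ∑ i : Fin n, ((i : ℕ) : ℝ) * x i) (by fun_prop)
  refine ⟨xss, hxss, fun x hx => hcost.trans (hopt x hx), fun s t hst js jt hs ht => ?_⟩
  by_contra! hj
  obtain ⟨y, z, hyz, hy, hys, hyt, hzs⟩ := exists_transfer hlu hdisj (hl s t) (hu s t)
    (fun j => (hgap s j).trans_le (hF2 s j j.succ.isLt))
    (fun j => (hgap t j).trans_le (hL2 t j j.succ.isLt))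
    hj hs ht
  exact (sum_mul_lt_sum_mul_update_update hst hyz hy).not_ge <| hmax
    ⟨update_update_mem_feasibleSet hxss hst.ne hyz hyt hzs,
      (sum_map_add_update_update_le hφ hst.ne (hb hst.le) hyz hy.le hys).trans hcost⟩
end
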